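/- arXiv:1210.1915 — 4 statements merged into one kernel-verified Lean document; each statement's English description precedes it below -/
import Mathlib

section
/- (Menger / maxflow-mincut, edge version) In a finite directed graph G with vertex set A and a vertex t ∉ A, the maximum number of pairwise edge-disjoint paths from A to t equals the minimum number of edges whose removal disconnects every vertex of A from t. -/
/-- `p` is a (nonempty) directed path from some vertex of `A` to `t`, in the
directed multigraph given by the tail/head maps `tl`, `hd`. -/
def IsPathFrom {V E : Type*} (tl hd : E → V) (A : Set V) (t : V) (p : List E) : Prop :=
  ∃ h : p ≠ [], tl (p.head h) ∈ A ∧ hd (p.getLast h) = t ∧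
    List.Chain' (fun e f => hd e = tl f) p

/-- `maxflow tl hd A t` : the maximum number of pairwise edge-disjoint paths from
vertices of `A` to `t`. -/
noncomputable def maxflow {V E : Type*} (tl hd : E → V) (A : Set V) (t : V) : ℕ :=
  sSup {n | ∃ P : Fin n → List E, (∀ i, IsPathFrom tl hd A t (P i)) ∧
    ∀ i j, i ≠ j → ∀ e, e ∈ P i → e ∉ P j}

/-- `C` is an `A`–`t` edge cut: every path from `A` to `t` uses an edge of `C`. -/
def IsEdgeCut {V E : Type*} (tl hd : E → V) (A : Set V) (t : V) (C : Finset E) : Prop :=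
  ∀ p : List E, IsPathFrom tl hd A t p → ∃ e ∈ C, e ∈ p

/-!
Ford–Fulkerson with 0/1 flows. A flow is a set `F` of edges whose boundary (in-degree minus
out-degree) vanishes outside `A ∪ {t}`; its value is the boundary at `t`. Tracing a flow
backwards from `t` peels off paths from `A` to `t` one at a time, so a flow of value `k` contains
`k` edge-disjoint paths. If `F` has maximal value, `t` is not reachable from `A` in the residual
graph, since flipping the edges of a shortest augmenting walk would raise the value. Let `R` be
the set of residually reachable vertices: every path from `A` to `t` leaves `R` along an edge of
`F`, and no edge of `F` enters `R`, so the edges of `F` leaving `R` form a cut whose size is the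
value of `F`. Conversely, edge-disjoint paths need pairwise distinct edges of any cut.
-/

open Finset Function

lemma List.exists_eq_append_cons_append_cons_of_not_nodup_map {α β : Type*} (f : α → β)
    {l : List α} (h : ¬ (l.map f).Nodup) :
    ∃ l₁ x l₂ y l₃, l = l₁ ++ x :: l₂ ++ y :: l₃ ∧ f x = f y := by
  induction l with
  | nil => simp at h
  | cons a l ih =>
    by_cases ha : f a ∈ l.map f
    · obtain ⟨y, hy, hfy⟩ := List.mem_map.1 ha
      obtain ⟨l₂, l₃, rfl⟩ := List.append_of_mem hy
      exact ⟨[], a, l₂, y, l₃, by simp, hfy.symm⟩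
    · obtain ⟨l₁, x, l₂, y, l₃, rfl, hxy⟩ := ih (by simpa [ha] using h)
      exact ⟨a :: l₁, x, l₂, y, l₃, by simp, hxy⟩

section Walks

variable {V E : Type*} {tl hd : E → V}

variable (tl hd) in
def IsWalk : V → List E → V → Prop
  | x, [], y => x = y
  | x, e :: p, y => tl e = x ∧ IsWalk (hd e) p y

@[simp] lemma isWalk_nil {x y : V} : IsWalk tl hd x [] y ↔ x = y := Iff.rfl

@[simp] lemma isWalk_cons {x y : V} {e : E} {p : List E} :
    IsWalk tl hd x (e :: p) y ↔ tl e = x ∧ IsWalk tl hd (hd e) p y := Iff.rfl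

lemma isWalk_append {x z : V} {p q : List E} :
    IsWalk tl hd x (p ++ q) z ↔ ∃ y, IsWalk tl hd x p y ∧ IsWalk tl hd y q z := by
  induction p generalizing x with
  | nil => simp
  | cons e p ih => simp [ih, and_assoc]

lemma isWalk_cons_iff_isChain {x y : V} {e : E} {p : List E} :
    IsWalk tl hd x (e :: p) y ↔ tl e = x ∧ (e :: p).IsChain (fun e f => hd e = tl f) ∧
      hd ((e :: p).getLast (List.cons_ne_nil e p)) = y := by
  induction p generalizing e x with
  | nil => simp
  | cons f p ih =>
    rw [isWalk_cons, ih, List.isChain_cons_cons, List.getLast_cons_cons]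
    grind

lemma isPathFrom_iff {A : Set V} {t : V} {p : List E} :
    IsPathFrom tl hd A t p ↔ ∃ a ∈ A, IsWalk tl hd a p t ∧ p ≠ [] := by
  cases p with
  | nil => simp [IsPathFrom]
  | cons e p =>
    refine ⟨fun ⟨_, ha, hlast, hchain⟩ =>
      ⟨_, ha, isWalk_cons_iff_isChain.2 ⟨rfl, hchain, hlast⟩, List.cons_ne_nil e p⟩, ?_⟩
    rintro ⟨a, ha, hw, -⟩
    obtain ⟨rfl, hchain, hlast⟩ := isWalk_cons_iff_isChain.1 hw
    exact ⟨List.cons_ne_nil e p, ha, hlast, hchain⟩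

lemma IsWalk.exists_cross (P : V → Prop) {x y : V} {p : List E} (hw : IsWalk tl hd x p y)
    (hx : P x) (hy : ¬ P y) : ∃ e ∈ p, P (tl e) ∧ ¬ P (hd e) := by
  induction p generalizing x with
  | nil => exact absurd (hw ▸ hx) hy
  | cons e p ih =>
    by_cases he : P (hd e)
    · obtain ⟨f, hf, hf'⟩ := ih hw.2 he
      exact ⟨f, List.mem_cons_of_mem e hf, hf'⟩
    · exact ⟨e, List.mem_cons_self, hw.1 ▸ hx, he⟩

/-- Repeatedly cut out the closed subwalk between two steps with the same `f`-label: by `hf`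
such steps either coincide or traverse one edge in opposite directions. -/
theorem IsWalk.exists_subset_nodup_map {α : Type*} (f : E → α)
    (hf : ∀ e e', f e = f e' → e = e' ∨ tl e = hd e') {x y : V} {p : List E}
    (hp : IsWalk tl hd x p y) :
    ∃ q, IsWalk tl hd x q y ∧ q ⊆ p ∧ (q.map f).Nodup := by
  by_cases hnd : (p.map f).Nodup
  · exact ⟨p, hp, List.Subset.refl p, hnd⟩
  obtain ⟨q, hq, hqp, hlen⟩ :
      ∃ q, IsWalk tl hd x q y ∧ q ⊆ p ∧ q.length < p.length := by
    obtain ⟨p₁, e, p₂, e', p₃, rfl, hee'⟩ :=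
      List.exists_eq_append_cons_append_cons_of_not_nodup_map f hnd
    obtain ⟨z, hp₁, hz, z', -, hz', hp₃⟩ :
        ∃ z, IsWalk tl hd x p₁ z ∧ tl e = z ∧
          ∃ z', IsWalk tl hd (hd e) p₂ z' ∧ tl e' = z' ∧ IsWalk tl hd (hd e') p₃ y := by
      simpa only [List.append_assoc, List.cons_append, isWalk_append, isWalk_cons] using hp
    rcases hf e e' hee' with rfl | htl
    · refine ⟨p₁ ++ e :: p₃, ?_, fun g => by simp; tauto, by simp⟩
      exact isWalk_append.2 ⟨z, hp₁, hz, by simpa [hz'] using hp₃⟩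
    · refine ⟨p₁ ++ p₃, ?_, fun g => by simp; tauto, by simp; omega⟩
      exact isWalk_append.2 ⟨z, hp₁, by simpa [← hz, htl, hz'] using hp₃⟩
  obtain ⟨q', hq', hq'q, hnd'⟩ := hq.exists_subset_nodup_map f hf
  exact ⟨q', hq', List.Subset.trans hq'q hqp, hnd'⟩
termination_by p.length

end Walks

section Boundary

variable {V E : Type*} [DecidableEq V] {tl hd : E → V}

variable (tl hd) in
def boundary (F : Finset E) : V → ℤ :=
  ∑ e ∈ F, (Pi.single (hd e) 1 - Pi.single (tl e) 1)

lemma boundary_apply (F : Finset E) (v : V) :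
    boundary tl hd F v =
      ∑ e ∈ F, ((Pi.single (hd e) 1 : V → ℤ) v - (Pi.single (tl e) 1 : V → ℤ) v) := by
  simp [boundary, Finset.sum_apply]

lemma boundary_sdiff [DecidableEq E] {F Q : Finset E} (h : Q ⊆ F) :
    boundary tl hd (F \ Q) = boundary tl hd F - boundary tl hd Q :=
  sum_sdiff_eq_sub h

lemma IsWalk.boundary_toFinset [DecidableEq E] {x y : V} {p : List E}
    (hp : IsWalk tl hd x p y) (hnd : p.Nodup) :
    boundary tl hd p.toFinset = Pi.single y 1 - Pi.single x 1 := by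
  induction p generalizing x with
  | nil => subst hp; simp [boundary]
  | cons e p ih =>
    obtain ⟨he, hnd⟩ := List.nodup_cons.1 hnd
    rw [List.toFinset_cons, boundary, sum_insert (by simpa using he), ← boundary,
      ih hp.2 hnd, hp.1]
    abel

lemma exists_mem_sdiff_hd_eq_of_boundary_lt [DecidableEq E] {P F : Finset E} (hPF : P ⊆ F)
    {x : V} (h : boundary tl hd P x < boundary tl hd F x) : ∃ g ∈ F, g ∉ P ∧ hd g = x := by
  by_contra! hno
  have hle : boundary tl hd (F \ P) x ≤ 0 := by
    rw [boundary_apply]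
    refine sum_nonpos fun e he => ?_
    obtain ⟨heF, heP⟩ := mem_sdiff.1 he
    rw [Pi.single_eq_of_ne (hno e heF heP).symm, Pi.single_apply]
    split_ifs <;> norm_num
  rw [boundary_sdiff hPF] at hle
  simp only [Pi.sub_apply] at hle
  omega

/-- Summation by parts: `∑ e ∈ F, (φ (hd e) - φ (tl e)) = ∑ v, φ v * boundary F v`. -/
lemma sum_sub_eq_mul_boundary (F : Finset E) (φ : V → ℤ) (t : V)
    (hφ : ∀ v ≠ t, φ v * boundary tl hd F v = 0) :
    ∑ e ∈ F, (φ (hd e) - φ (tl e)) = φ t * boundary tl hd F t := by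
  set S := insert t (F.image hd ∪ F.image tl)
  have hS : ∀ e ∈ F, φ (hd e) - φ (tl e) =
      ∑ v ∈ S, φ v * ((Pi.single (hd e) 1 : V → ℤ) v - (Pi.single (tl e) 1 : V → ℤ) v) :=
    fun e he => by
    have hhd : hd e ∈ S := mem_insert_of_mem (mem_union_left _ (mem_image_of_mem hd he))
    have htl : tl e ∈ S := mem_insert_of_mem (mem_union_right _ (mem_image_of_mem tl he))
    simp [Pi.single_apply, mul_sub, sum_sub_distrib, hhd, htl]
  calc ∑ e ∈ F, (φ (hd e) - φ (tl e))
      = ∑ v ∈ S, φ v * boundary tl hd F v := by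
        simp only [sum_congr rfl hS, boundary_apply, mul_sum]
        exact sum_comm
    _ = φ t * boundary tl hd F t := sum_eq_single_of_mem t (mem_insert_self _ _)
        fun v _ hv => hφ v hv

end Boundary

section Flow

variable {V E : Type*} [DecidableEq V] {tl hd : E → V} {A : Set V} {t : V}

variable (tl hd A t) in
def IsFlow (F : Finset E) : Prop :=
  ∀ v ∉ A, v ≠ t → boundary tl hd F v = 0

lemma IsFlow.of_boundary_eq {F G : Finset E} (hF : IsFlow tl hd A t F) {a : V} (ha : a ∈ A)
    (h : ∀ v, v ≠ t → v ≠ a → boundary tl hd G v = boundary tl hd F v) :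
    IsFlow tl hd A t G := fun v hv hvt =>
  (h v hvt fun hva => hv (hva ▸ ha)).trans (hF v hv hvt)

/-- Tracing a flow backwards from `t`: as long as the current vertex `x` is not in `A`, the
flow brings more into `x` than the walk built so far, so some unused edge of `F` enters `x`. -/
theorem IsFlow.exists_walk_of_boundary_pos [DecidableEq E] {F : Finset E}
    (hF : IsFlow tl hd A t F) (hpos : 0 < boundary tl hd F t) {x : V} {p : List E}
    (hp : IsWalk tl hd x p t) (hnd : p.Nodup) (hpF : ∀ e ∈ p, e ∈ F) :
    ∃ a ∈ A, ∃ q, IsWalk tl hd a q t ∧ q.Nodup ∧ ∀ e ∈ q, e ∈ F := by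
  by_cases hx : x ∈ A
  · exact ⟨x, hx, p, hp, hnd, hpF⟩
  have hsub : p.toFinset ⊆ F := fun e he => hpF e (List.mem_toFinset.1 he)
  have hlt : boundary tl hd p.toFinset x < boundary tl hd F x := by
    rw [hp.boundary_toFinset hnd]
    by_cases hxt : x = t
    · subst hxt; simpa using hpos
    · simp [hxt, hF x hx hxt]
  obtain ⟨g, hgF, hgp, rfl⟩ := exists_mem_sdiff_hd_eq_of_boundary_lt hsub hlt
  have hgp' : g ∉ p := fun h => hgp (List.mem_toFinset.2 h)
  have : p.length < F.card := by
    have := card_le_card (insert_subset hgF hsub)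
    rwa [card_insert_of_notMem hgp, List.toFinset_card_of_nodup hnd, Nat.succ_le_iff] at this
  exact hF.exists_walk_of_boundary_pos hpos (p := g :: p) ⟨rfl, hp⟩
    (List.nodup_cons.2 ⟨hgp', hnd⟩) (List.forall_mem_cons.2 ⟨hgF, hpF⟩)
termination_by F.card - p.length

theorem IsFlow.exists_disjoint_paths [DecidableEq E] (ht : t ∉ A) (k : ℕ) {F : Finset E}
    (hF : IsFlow tl hd A t F) (hk : boundary tl hd F t = k) :
    ∃ P : Fin k → List E, (∀ i, IsPathFrom tl hd A t (P i)) ∧ (∀ i, ∀ e ∈ P i, e ∈ F) ∧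
      Pairwise (List.Disjoint on P) := by
  induction k generalizing F with
  | zero => exact ⟨finZeroElim, finZeroElim, finZeroElim, fun i => i.elim0⟩
  | succ k ih =>
    obtain ⟨a, ha, q, hq, hqnd, hqF⟩ :=
      hF.exists_walk_of_boundary_pos (by omega) (p := []) rfl List.nodup_nil (by simp)
    have hat : a ≠ t := fun h => ht (h ▸ ha)
    have hqsub : q.toFinset ⊆ F := fun e he => hqF e (List.mem_toFinset.1 he)
    have hbd := boundary_sdiff (tl := tl) (hd := hd) hqsub
    rw [hq.boundary_toFinset hqnd] at hbd
    have hF' : IsFlow tl hd A t (F \ q.toFinset) :=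
      hF.of_boundary_eq ha fun v hvt hva => by simp [hbd, hvt, hva]
    obtain ⟨P, hP, hPF, hdisj⟩ := ih hF' (by simp [hbd, hat.symm, hk])
    have hqpath : IsPathFrom tl hd A t q :=
      isPathFrom_iff.2 ⟨a, ha, hq, by rintro rfl; exact hat hq⟩
    have hqP : ∀ i, List.Disjoint q (P i) := fun i e heq heP =>
      (mem_sdiff.1 (hPF i e heP)).2 (List.mem_toFinset.2 heq)
    refine ⟨Fin.cons q P, Fin.cases hqpath hP,
      Fin.cases hqF fun i e he => (mem_sdiff.1 (hPF i e he)).1, fun i j hij => ?_⟩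
    cases i using Fin.cases <;> cases j using Fin.cases
    · exact absurd rfl hij
    · exact hqP _
    · exact (hqP _).symm
    · exact hdisj fun h => hij (congrArg _ h)

end Flow

section Residual

variable {V E : Type*} {tl hd : E → V} {A : Set V} {t : V}

/-- A step of the residual graph of `F`: `inl e` traverses `e ∉ F` forwards, `inr e`
traverses `e ∈ F` backwards. -/
def IsResidual (F : Finset E) : E ⊕ E → Prop :=
  Sum.elim (· ∉ F) (· ∈ F)

variable (tl hd A) in
def ResReachable (F : Finset E) (v : V) : Prop :=
  ∃ a ∈ A, ∃ w, IsWalk (Sum.elim tl hd) (Sum.elim hd tl) a w v ∧ ∀ s ∈ w, IsResidual F s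

lemma resReachable_of_mem {F : Finset E} {a : V} (ha : a ∈ A) : ResReachable tl hd A F a :=
  ⟨a, ha, [], rfl, by simp⟩

lemma ResReachable.step {F : Finset E} {s : E ⊕ E}
    (h : ResReachable tl hd A F (Sum.elim tl hd s)) (hs : IsResidual F s) :
    ResReachable tl hd A F (Sum.elim hd tl s) := by
  obtain ⟨a, ha, w, hw, hres⟩ := h
  refine ⟨a, ha, w ++ [s], isWalk_append.2 ⟨_, hw, rfl, rfl⟩, ?_⟩
  exact List.forall_mem_append.2 ⟨hres, by simpa using hs⟩

lemma eq_or_elim_tl_hd_eq_of_elim_id_eq (s s' : E ⊕ E) :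
    Sum.elim id id s = Sum.elim id id s' → s = s' ∨ Sum.elim tl hd s = Sum.elim hd tl s' := by
  cases s <;> cases s' <;> simp +contextual

def flipEdge [DecidableEq E] (F : Finset E) : E ⊕ E → Finset E :=
  Sum.elim (insert · F) (F.erase ·)

lemma boundary_flipEdge [DecidableEq V] [DecidableEq E] {F : Finset E} {s : E ⊕ E}
    (hs : IsResidual F s) :
    boundary tl hd (flipEdge F s) =
      boundary tl hd F + Pi.single (Sum.elim hd tl s) 1 - Pi.single (Sum.elim tl hd s) 1 := by
  cases s with
  | inl e => simp [flipEdge, boundary, sum_insert (show e ∉ F from hs)]; abel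
  | inr e => simp [flipEdge, boundary, sum_erase_eq_sub (show e ∈ F from hs)]; abel

lemma isResidual_flipEdge_iff [DecidableEq E] {F : Finset E} {s s' : E ⊕ E}
    (h : Sum.elim id id s' ≠ Sum.elim id id s) :
    IsResidual (flipEdge F s) s' ↔ IsResidual F s' := by
  cases s <;> cases s' <;> simp_all [IsResidual, flipEdge]

/-- Flip the edges of the walk one at a time; since they are distinct, the remaining steps stay
residual. -/
lemma exists_boundary_eq_of_residual_walk [DecidableEq V] [DecidableEq E] {w : List (E ⊕ E)}
    (hnd : (w.map (Sum.elim id id)).Nodup) {F : Finset E} {x y : V}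
    (hw : IsWalk (Sum.elim tl hd) (Sum.elim hd tl) x w y) (hres : ∀ s ∈ w, IsResidual F s) :
    ∃ G : Finset E, boundary tl hd G = boundary tl hd F + Pi.single y 1 - Pi.single x 1 := by
  induction w generalizing F x with
  | nil => exact ⟨F, by rw [← hw]; abel⟩
  | cons s w ih =>
    obtain ⟨hs, hnd⟩ := List.nodup_cons.1 hnd
    have hres' : ∀ s' ∈ w, IsResidual (flipEdge F s) s' := fun s' hs' =>
      (isResidual_flipEdge_iff fun h => hs (h ▸ List.mem_map_of_mem hs')).2
        (hres s' (List.mem_cons_of_mem s hs'))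
    obtain ⟨G, hG⟩ := ih hnd hw.2 hres'
    refine ⟨G, ?_⟩
    rw [hG, boundary_flipEdge (hres s List.mem_cons_self), hw.1]
    abel

theorem IsFlow.not_resReachable_of_forall_le [DecidableEq V] [DecidableEq E] (ht : t ∉ A)
    {F : Finset E} (hF : IsFlow tl hd A t F)
    (hmax : ∀ G, IsFlow tl hd A t G → boundary tl hd G t ≤ boundary tl hd F t) :
    ¬ ResReachable tl hd A F t := by
  rintro ⟨a, ha, w, hw, hres⟩
  obtain ⟨w', hw', hw'w, hnd⟩ := hw.exists_subset_nodup_map _ eq_or_elim_tl_hd_eq_of_elim_id_eq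
  obtain ⟨G, hG⟩ := exists_boundary_eq_of_residual_walk hnd hw' fun s hs => hres s (hw'w hs)
  have hat : a ≠ t := fun h => ht (h ▸ ha)
  have := hmax G (hF.of_boundary_eq ha fun v hvt hva => by simp [hG, hvt, hva])
  simp [hG, hat.symm] at this

theorem IsFlow.exists_isEdgeCut [DecidableEq V] {F : Finset E} (hF : IsFlow tl hd A t F)
    (hnr : ¬ ResReachable tl hd A F t) :
    ∃ C, IsEdgeCut tl hd A t C ∧ (C.card : ℤ) = boundary tl hd F t := by
  classical
  set R := ResReachable tl hd A F
  have hfwd : ∀ e ∉ F, R (tl e) → R (hd e) := fun e he h => ResReachable.step (s := .inl e) h he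
  have hbwd : ∀ e ∈ F, R (hd e) → R (tl e) := fun e he h => ResReachable.step (s := .inr e) h he
  refine ⟨F.filter fun e => R (tl e) ∧ ¬ R (hd e), fun p hp => ?_, ?_⟩
  · obtain ⟨a, ha, hw, -⟩ := isPathFrom_iff.1 hp
    obtain ⟨e, hep, htl, hhd⟩ := hw.exists_cross R (resReachable_of_mem ha) hnr
    exact ⟨e, mem_filter.2 ⟨by_contra fun he => hhd (hfwd e he htl), htl, hhd⟩, hep⟩
  · have hflux := sum_sub_eq_mul_boundary (tl := tl) (hd := hd) F
      (fun v => if R v then 0 else 1) t fun v hv => by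
        by_cases hRv : R v
        · simp [hRv]
        · simp [hRv, hF v (fun ha => hRv (resReachable_of_mem ha)) hv]
    rw [if_neg hnr, one_mul] at hflux
    rw [← hflux, natCast_card_filter]
    refine sum_congr rfl fun e he => ?_
    by_cases htl : R (tl e) <;> by_cases hhd : R (hd e) <;> simp [htl, hhd]
    exact htl (hbwd e he hhd)

end Residual

section MaxFlowMinCut

variable {V E : Type*} {tl hd : E → V} {A : Set V} {t : V}

lemma card_le_of_isEdgeCut {n : ℕ} {P : Fin n → List E} (hP : ∀ i, IsPathFrom tl hd A t (P i))
    (hdisj : Pairwise (List.Disjoint on P)) {C : Finset E}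
    (hC : IsEdgeCut tl hd A t C) : n ≤ C.card := by
  choose f hfC hfP using fun i => hC (P i) (hP i)
  have hf : Injective f := fun i j hij =>
    by_contra fun hne => hdisj hne (hfP i) (hij ▸ hfP j)
  simpa using card_le_card_of_injOn f (s := univ) (fun i _ => hfC i) hf.injOn

lemma maxflow_le_card_of_isEdgeCut {C : Finset E} (hC : IsEdgeCut tl hd A t C) :
    maxflow tl hd A t ≤ C.card :=
  csSup_le ⟨0, finZeroElim, finZeroElim, fun i => i.elim0⟩
    fun _ ⟨_, hP, hdisj⟩ => card_le_of_isEdgeCut hP hdisj hC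

lemma isEdgeCut_univ [Fintype E] : IsEdgeCut tl hd A t univ :=
  fun _ hp => ⟨_, mem_univ _, List.head_mem hp.1⟩

lemma le_maxflow [Fintype E] {n : ℕ} {P : Fin n → List E}
    (hP : ∀ i, IsPathFrom tl hd A t (P i)) (hdisj : Pairwise (List.Disjoint on P)) :
    n ≤ maxflow tl hd A t :=
  le_csSup ⟨_, fun _ ⟨_, hP, hdisj⟩ => card_le_of_isEdgeCut hP hdisj isEdgeCut_univ⟩
    ⟨P, hP, hdisj⟩

variable (tl hd A t) in
lemma exists_isFlow_forall_le [DecidableEq V] [Fintype E] :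
    ∃ F, IsFlow tl hd A t F ∧
      ∀ G, IsFlow tl hd A t G → boundary tl hd G t ≤ boundary tl hd F t := by
  classical
  obtain ⟨F, hF, hmax⟩ := exists_max_image (univ.filter (IsFlow tl hd A t))
    (boundary tl hd · t) ⟨∅, mem_filter.2 ⟨mem_univ _, fun v _ _ => by simp [boundary]⟩⟩
  exact ⟨F, (mem_filter.1 hF).2, fun G hG => hmax G (mem_filter.2 ⟨mem_univ _, hG⟩)⟩

end MaxFlowMinCut

/-- Menger / maxflow–mincut, edge version: the maximum number of pairwise
edge-disjoint paths from `A` to `t ∉ A` equals the minimum size of an `A`–`t`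
edge cut. -/
theorem stmt11 {V E : Type*} [Fintype E] (tl hd : E → V) (A : Set V) (t : V)
    (ht : t ∉ A) :
    maxflow tl hd A t =
      sInf {n | ∃ C : Finset E, IsEdgeCut tl hd A t C ∧ C.card = n} := by
  classical
  obtain ⟨F, hF, hmax⟩ := exists_isFlow_forall_le tl hd A t
  obtain ⟨C, hC, hCF⟩ := hF.exists_isEdgeCut (hF.not_resReachable_of_forall_le ht hmax)
  obtain ⟨P, hP, -, hdisj⟩ := hF.exists_disjoint_paths ht C.card hCF.symm
  refine le_antisymm (le_csInf ⟨C.card, C, hC, rfl⟩ ?_) ?_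
  · rintro _ ⟨D, hD, rfl⟩
    exact maxflow_le_card_of_isEdgeCut hD
  · exact (Nat.sInf_le (by exact ⟨C, hC, rfl⟩)).trans (le_maxflow hP hdisj)
end

section
/- Let ψ : E → F^r be a linear network code on a DAG G, S₁ ⊆ S a subset of sources, U₁ the span of the unit vectors b_{i,j} for sᵢ ∈ S₁, and U₂ the span of the remaining unit vectors. If (V_S, V_T) is an S₁–t edge cut with cut edge set C, then for every edge e with head(e) = t, the U₁-component ψ(e)|_{U₁} lies in span{ψ(e')|_{U₁} : e' ∈ C}. -/
/-!
Along the acyclic graph, the vector on a non-source edge is a combination of the vectors on the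
edges entering its tail, and this survives projecting onto `U₁`. Induct on edges `e` whose head
lies outside `V_S`: if the tail of `e` is in `V_S`, then `e` is a cut edge; if `e` is a source
edge with tail outside `V_S`, its source is not in `S₁`, so its `U₁`-component vanishes;
otherwise every edge entering the tail of `e` again has its head outside `V_S`.
-/

open Submodule

theorem wellFounded_hd_eq_tl_of_acyclic {V E : Type*} [Finite E] (tl hd : E → V)
    (hacyc : ∀ v : V,
      ¬ Relation.TransGen (fun a b => ∃ e : E, tl e = a ∧ hd e = b) v v) :
    WellFounded fun e' e : E => hd e' = tl e := by
  have hlift : ∀ a b : E, Relation.TransGen (fun e' e : E => hd e' = tl e) a b →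
      Relation.TransGen (fun a b => ∃ e : E, tl e = a ∧ hd e = b) (tl a) (tl b) := by
    intro a b h
    induction h with
    | single h => exact .single ⟨a, rfl, h⟩
    | tail _ h ih => exact ih.tail ⟨_, rfl, h⟩
  have : Std.Irrefl (Relation.TransGen fun e' e : E => hd e' = tl e) :=
    ⟨fun a h => hacyc (tl a) (hlift a a h)⟩
  have hwf : WellFounded (Relation.TransGen fun e' e : E => hd e' = tl e) :=
    Finite.wellFounded_of_trans_of_irrefl _
  exact hwf.mono fun _ _ h => .single h

/-- For `p j ↔ srcOf j ∈ S₁` this is the `U₁`-component `x ↦ x|_{U₁}`. -/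
def restrictCoords (F : Type*) [Semiring F] {ι : Type*} (p : ι → Prop) [DecidablePred p] :
    (ι → F) →ₗ[F] (ι → F) where
  toFun x j := if p j then x j else 0
  map_add' x y := by funext j; by_cases h : p j <;> simp [h]
  map_smul' c x := by funext j; by_cases h : p j <;> simp [h]

theorem restrictCoords_single_of_not {F ι : Type*} [Semiring F] [DecidableEq ι]
    {p : ι → Prop} [DecidablePred p] {j : ι} (hj : ¬ p j) (a : F) :
    restrictCoords F p (Pi.single j a) = 0 := by
  funext j'
  by_cases hj' : j' = j
  · subst hj'; simp [restrictCoords, hj]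
  · simp [restrictCoords, hj']

theorem map_mem_span_cut_of_hd_notMem {V E F M N : Type*} [Semiring F]
    [AddCommMonoid M] [Module F M] [AddCommMonoid N] [Module F N]
    (tl hd : E → V) (hwf : WellFounded fun e' e : E => hd e' = tl e)
    (src : Set E) (ψ : E → M)
    (hψ : ∀ e, e ∉ src → ψ e ∈ span F {x | ∃ e', hd e' = tl e ∧ x = ψ e'})
    (π : M →ₗ[F] N) (VS : Set V) (hsrc : ∀ e ∈ src, tl e ∉ VS → π (ψ e) = 0)
    (e : E) (he : hd e ∉ VS) :
    π (ψ e) ∈ span F {x | ∃ e', (tl e' ∈ VS ∧ hd e' ∉ VS) ∧ x = π (ψ e')} := by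
  induction e using hwf.induction with
  | _ e ih =>
    by_cases htl : tl e ∈ VS
    · exact subset_span ⟨e, ⟨htl, he⟩, rfl⟩
    by_cases hes : e ∈ src
    · rw [hsrc e hes htl]
      exact zero_mem _
    refine span_le.2 ?_ (apply_mem_span_image_of_mem_span π (hψ e hes))
    rintro _ ⟨_, ⟨e', he', rfl⟩, rfl⟩
    exact ih e' he' (he' ▸ htl)

theorem stmt12_general {V E F : Type*} [Fintype E] [Field F] {r m : ℕ}
    (tl hd : E → V)
    (hacyc : ∀ v : V,
      ¬ Relation.TransGen (fun a b => ∃ e : E, tl e = a ∧ hd e = b) v v)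
    (srcOf : Fin r → Fin m) (ι : Fin r → E)
    (ψ : E → Fin r → F)
    (hψsrc : ∀ j, ψ (ι j) = Pi.single j 1)
    (hψ : ∀ e, e ∉ Set.range ι →
      ψ e ∈ Submodule.span F {x | ∃ e', hd e' = tl e ∧ x = ψ e'})
    (S₁ : Set (Fin m)) [DecidablePred (· ∈ S₁)]
    (t : V) (VS : Set V)
    (hcutS : ∀ j, srcOf j ∈ S₁ → tl (ι j) ∈ VS) (hcutT : t ∉ VS)
    (e : E) (he : hd e = t) :
    (fun j => if srcOf j ∈ S₁ then ψ e j else 0) ∈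
      Submodule.span F
        {x | ∃ e', (tl e' ∈ VS ∧ hd e' ∉ VS) ∧
          x = fun j => if srcOf j ∈ S₁ then ψ e' j else 0} := by
  have hsrc : ∀ e' ∈ Set.range ι, tl e' ∉ VS →
      restrictCoords F (fun j => srcOf j ∈ S₁) (ψ e') = 0 := by
    rintro _ ⟨j, rfl⟩ htl
    rw [hψsrc]
    exact restrictCoords_single_of_not (p := fun j => srcOf j ∈ S₁) (fun hj => htl (hcutS j hj)) 1
  exact map_mem_span_cut_of_hd_notMem tl hd (wellFounded_hd_eq_tl_of_acyclic tl hd hacyc)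
    (Set.range ι) ψ hψ _ VS hsrc e (he ▸ hcutT)

/-- Lemma 1 of the paper.  `ψ` is a linear network code on a finite DAG:
the `j`-th source edge `ι j` (belonging to source `srcOf j`) carries the unit
vector `b_j = Pi.single j 1`, and every non-source edge carries a linear
combination of the vectors on the edges entering its tail.  If `(V_S, V_Sᶜ)` is an
`S₁`–`t` edge cut (all sources of `S₁` lie in `V_S` and `t ∉ V_S`), then for every
edge `e` into `t`, the `U₁`-component of `ψ e` (coordinates `j` with
`srcOf j ∈ S₁`) lies in the span of the `U₁`-components on the cut edges. -/
theorem stmt12 {V E F : Type*} [Fintype E] [Field F] {r m : ℕ}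
    (tl hd : E → V)
    (hacyc : ∀ v : V,
      ¬ Relation.TransGen (fun a b => ∃ e : E, tl e = a ∧ hd e = b) v v)
    (srcOf : Fin r → Fin m) (ι : Fin r → E) (hι : Function.Injective ι)
    (ψ : E → Fin r → F)
    (hψsrc : ∀ j, ψ (ι j) = Pi.single j 1)
    (hψ : ∀ e, e ∉ Set.range ι →
      ψ e ∈ Submodule.span F {x | ∃ e', hd e' = tl e ∧ x = ψ e'})
    (S₁ : Set (Fin m)) [DecidablePred (· ∈ S₁)]
    (t : V) (VS : Set V)
    (hcutS : ∀ j, srcOf j ∈ S₁ → tl (ι j) ∈ VS) (hcutT : t ∉ VS)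
    (e : E) (he : hd e = t) :
    (fun j => if srcOf j ∈ S₁ then ψ e j else 0) ∈
      Submodule.span F
        {x | ∃ e', (tl e' ∈ VS ∧ hd e' ∉ VS) ∧
          x = fun j => if srcOf j ∈ S₁ then ψ e' j else 0} :=
  stmt12_general tl hd hacyc srcOf ι ψ hψsrc hψ S₁ t VS hcutS hcutT e he
end

section
/- Let ψ be a linear network code on a DAG. For any vertex t and any vertex set A containing all sources, rank{ψ(e) : head(e) = t} ≤ maxflow(A, t). -/
open Submodule

theorem exists_height_of_acyclic {V E : Type*} [Finite E] (tl hd : E → V)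
    (hacyc : ∀ v : V,
      ¬ Relation.TransGen (fun a b => ∃ e : E, tl e = a ∧ hd e = b) v v) :
    ∃ ν : V → ℕ, ∀ e, ν (tl e) < ν (hd e) := by
  set R : V → V → Prop := fun a b => ∃ e : E, tl e = a ∧ hd e = b
  have hfin : ∀ v, {w | Relation.TransGen R w v}.Finite := fun v =>
    (Set.finite_range tl).subset fun w hw => by
      obtain ⟨_, ⟨e, he, -⟩, -⟩ := Relation.TransGen.head'_iff.1 hw
      exact ⟨e, he⟩
  refine ⟨fun v => {w | Relation.TransGen R w v}.ncard, fun e => Set.ncard_lt_ncard ?_ (hfin _)⟩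
  have hR : R (tl e) (hd e) := ⟨e, rfl, rfl⟩
  refine (Set.ssubset_iff_of_subset fun w hw => Relation.TransGen.tail hw hR).2
    ⟨tl e, Relation.TransGen.single hR, hacyc _⟩

theorem LinearIndependent.update_of_notMem_span {ι K M : Type*} [DivisionRing K]
    [AddCommGroup M] [Module K M] [DecidableEq ι] {v : ι → M} (hv : LinearIndependent K v)
    (i : ι) {x : M} (hx : x ∉ span K (v '' {i}ᶜ)) :
    LinearIndependent K (Function.update v i x) := by
  have heq : Set.EqOn (Function.update v i x) v {i}ᶜ := fun j hj => Function.update_of_ne hj _ _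
  rw [← linearIndepOn_univ_iff, ← Set.union_compl_self {i}, Set.singleton_union,
    linearIndepOn_insert (by simp : i ∉ ({i}ᶜ : Set ι)), linearIndepOn_congr heq, heq.image_eq,
    Function.update_self]
  exact ⟨hv.linearIndepOn _, hx⟩

theorem LinearIndependent.exists_update_of_mem_span {ι K M : Type*} [DivisionRing K]
    [AddCommGroup M] [Module K M] [DecidableEq ι] {v : ι → M} (hv : LinearIndependent K v)
    {i : ι} {s : Set M} (hi : v i ∈ span K s) :
    ∃ x ∈ s, LinearIndependent K (Function.update v i x) := by
  by_contra! h
  have hle : span K s ≤ span K (v '' {i}ᶜ) := by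
    refine span_le.2 fun x hx => ?_
    by_contra hx'
    exact h x hx (hv.update_of_notMem_span i hx')
  exact hv.notMem_span_image (by simp : i ∉ ({i}ᶜ : Set ι)) (hle hi)

section Paths

variable {V E : Type*} {tl hd : E → V} {A : Set V}

theorem isPathFrom_singleton {e : E} (he : tl e ∈ A) : IsPathFrom tl hd A (hd e) [e] :=
  ⟨List.cons_ne_nil e [], he, rfl, List.isChain_singleton e⟩

theorem IsPathFrom.append_singleton {p : List E} {e : E} (hp : IsPathFrom tl hd A (tl e) p) :
    IsPathFrom tl hd A (hd e) (p ++ [e]) := by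
  obtain ⟨hne, hhead, hlast, hchain⟩ := hp
  refine ⟨by simp, by rwa [List.head_append_of_ne_nil hne], by simp, ?_⟩
  refine List.IsChain.append hchain (List.isChain_singleton e) fun x hx y hy => ?_
  rw [List.getLast?_eq_some_getLast hne, Option.mem_some_iff] at hx
  rw [List.head?_cons, Option.mem_some_iff] at hy
  rw [← hx, ← hy, hlast]

theorem height_le_of_isChain {ν : V → ℕ} (hν : ∀ e, ν (tl e) ≤ ν (hd e)) :
    ∀ {p : List E}, (p.IsChain fun a b => hd a = tl b) → ∀ hne : p ≠ [],
      ∀ g ∈ p, ν (hd g) ≤ ν (hd (p.getLast hne))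
  | [], _, hne => absurd rfl hne
  | [_], _, _ => by simp
  | a :: b :: l, hp, _ => by
    rw [List.isChain_cons_cons] at hp
    have ih := height_le_of_isChain hν hp.2 (List.cons_ne_nil b l)
    intro g hg
    rw [List.getLast_cons_cons]
    rcases List.mem_cons.1 hg with rfl | hg
    · exact (hp.1 ▸ hν b).trans (ih b List.mem_cons_self)
    · exact ih g hg

theorem IsPathFrom.height_le {ν : V → ℕ} (hν : ∀ e, ν (tl e) ≤ ν (hd e)) {t : V} {p : List E}
    (hp : IsPathFrom tl hd A t p) {g : E} (hg : g ∈ p) : ν (hd g) ≤ ν t := by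
  obtain ⟨hne, -, rfl, hchain⟩ := hp
  exact height_le_of_isChain hν hchain hne g hg

theorem card_le_maxflow [Finite E] {κ : Type*} [Fintype κ] {t : V} (P : κ → List E)
    (hP : ∀ i, IsPathFrom tl hd A t (P i)) (hdisj : Pairwise fun i j => (P i).Disjoint (P j)) :
    Fintype.card κ ≤ maxflow tl hd A t := by
  refine le_csSup ⟨Nat.card E, ?_⟩ ⟨fun n => P ((Fintype.equivFin κ).symm n), fun n => hP _,
    fun m n hmn e hm hn => hdisj ((Fintype.equivFin κ).symm.injective.ne hmn) hm hn⟩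
  rintro n ⟨Q, hQ, hQdisj⟩
  have hinj : Function.Injective fun m => (Q m).head (hQ m).1 := fun m n hmn => by
    by_contra hne
    dsimp only at hmn
    exact hQdisj m n hne _ (List.head_mem _) (hmn ▸ List.head_mem (hQ n).1)
  simpa using Nat.card_le_card_of_injective _ hinj

end Paths

theorem pairwise_disjoint_update_append {E κ : Type*} [DecidableEq κ] {P : κ → List E}
    (hP : Pairwise fun j k => (P j).Disjoint (P k)) {i : κ} {x : E} (hx : ∀ j ≠ i, x ∉ P j) :
    Pairwise fun j k => (Function.update P i (P i ++ [x]) j).Disjoint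
      (Function.update P i (P i ++ [x]) k) := by
  intro j k hjk
  rcases eq_or_ne j i with rfl | hj
  · simpa [Function.update_of_ne hjk.symm, hP hjk] using hx k hjk.symm
  rcases eq_or_ne k i with rfl | hk
  · simpa [Function.update_of_ne hjk, hP hjk] using hx j hjk
  simpa [Function.update_of_ne hj, Function.update_of_ne hk] using hP hjk

/-- Edge-disjoint paths `Q i ++ [e i]` from `A` ending with the edges `e i`; the path `Q i`
in front of `e i` is empty exactly when `e i` already starts in `A`. -/
structure IsLinkage {V E κ : Type*} (tl hd : E → V) (A : Set V) (e : κ → E) (Q : κ → List E) :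
    Prop where
  eq_nil : ∀ i, tl (e i) ∈ A → Q i = []
  isPathFrom : ∀ i, tl (e i) ∉ A → IsPathFrom tl hd A (tl (e i)) (Q i)
  disjoint : Pairwise fun i j => (Q i ++ [e i]).Disjoint (Q j ++ [e j])

namespace IsLinkage

variable {V E κ : Type*} {tl hd : E → V} {A : Set V} {e : κ → E} {Q : κ → List E}

theorem isPathFrom_append (h : IsLinkage tl hd A e Q) (i : κ) :
    IsPathFrom tl hd A (hd (e i)) (Q i ++ [e i]) := by
  by_cases hi : tl (e i) ∈ A
  · rw [h.eq_nil i hi]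
    exact isPathFrom_singleton hi
  · exact (h.isPathFrom i hi).append_singleton

theorem of_forall_mem (hA : ∀ i, tl (e i) ∈ A) (he : Function.Injective e) :
    IsLinkage tl hd A e fun _ => [] where
  eq_nil _ _ := rfl
  isPathFrom i hi := absurd (hA i) hi
  disjoint _ _ hij := by simpa using (he.ne hij).symm

theorem update [DecidableEq κ] {i : κ} {f : E} (h : IsLinkage tl hd A (Function.update e i f) Q)
    (hf : hd f = tl (e i)) (hi : tl (e i) ∉ A) (hfresh : ∀ j ≠ i, e i ∉ Q j ++ [e j]) :
    IsLinkage tl hd A e (Function.update Q i (Q i ++ [f])) := by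
  have hpath : ∀ j, Function.update Q i (Q i ++ [f]) j ++ [e j] =
      Function.update (fun j => Q j ++ [Function.update e i f j]) i (Q i ++ [f] ++ [e i]) j := by
    intro j
    rcases eq_or_ne j i with rfl | hj
    · simp
    · simp [hj]
  refine ⟨fun j hj => ?_, fun j hj => ?_, ?_⟩
  · have hji : j ≠ i := by rintro rfl; exact hi hj
    simpa [hji] using h.eq_nil j (by simpa [hji] using hj)
  · rcases eq_or_ne j i with rfl | hji
    · simpa [hf] using h.isPathFrom_append j
    · simpa [hji] using h.isPathFrom j (by simpa [hji] using hj)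
  · have := pairwise_disjoint_update_append h.disjoint (i := i) (x := e i)
      fun j hj => by simpa [hj] using hfresh j hj
    simp only [Function.update_self] at this
    intro j k hjk
    rw [hpath j, hpath k]
    exact this hjk

end IsLinkage

theorem exists_isLinkage {V E κ F M : Type*} [Fintype κ] [DecidableEq κ] [DivisionRing F]
    [AddCommGroup M] [Module F M] {tl hd : E → V} {A : Set V} {ψ : E → M} {ν : V → ℕ}
    (hν : ∀ e, ν (tl e) < ν (hd e))
    (hψ : ∀ e, tl e ∉ A → ψ e ∈ span F (ψ '' {e' | hd e' = tl e}))
    (e : κ → E) (he : LinearIndependent F (ψ ∘ e)) : ∃ Q, IsLinkage tl hd A e Q := by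
  classical
  by_cases hA : ∀ i, tl (e i) ∈ A
  · exact ⟨_, .of_forall_mem hA he.injective.of_comp⟩
  obtain ⟨i, hi, hmax⟩ : ∃ i, tl (e i) ∉ A ∧ ∀ j, tl (e j) ∉ A → ν (tl (e j)) ≤ ν (tl (e i)) := by
    obtain ⟨i, hi, hmax⟩ := Finset.exists_max_image {j | tl (e j) ∉ A} (fun j => ν (tl (e j)))
      (by simpa [Finset.Nonempty] using not_forall.1 hA)
    exact ⟨i, by simpa using hi, fun j hj => hmax j (by simpa using hj)⟩
  obtain ⟨_, ⟨f, hf, rfl⟩, hindep⟩ := he.exists_update_of_mem_span (hψ (e i) hi)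
  rw [← Function.comp_update] at hindep
  have hdec : ∑ j, ν (tl (Function.update e i f j)) < ∑ j, ν (tl (e j)) := by
    have hlt : ν (tl f) < ν (tl (e i)) := hf ▸ hν f
    refine Finset.sum_lt_sum (fun j _ => ?_) ⟨i, Finset.mem_univ i, by simpa using hlt⟩
    rcases eq_or_ne j i with rfl | hj
    · simpa using hlt.le
    · simp [hj]
  obtain ⟨Q, hQ⟩ := exists_isLinkage hν hψ (Function.update e i f) hindep
  refine ⟨_, hQ.update hf hi fun j hj hmem => ?_⟩
  rcases List.mem_append.1 hmem with hmem | hmem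
  · have hjA : tl (e j) ∉ A := fun hjA => by
      simp [hQ.eq_nil j (by simpa [hj] using hjA)] at hmem
    have hle := (hQ.isPathFrom j (by simpa [hj] using hjA)).height_le (fun e => (hν e).le) hmem
    rw [Function.update_of_ne hj] at hle
    exact (hν (e i)).not_ge (hle.trans (hmax j hjA))
  · exact he.injective.of_comp.ne hj.symm (List.mem_singleton.1 hmem)
termination_by ∑ j, ν (tl (e j))
decreasing_by exact hdec

theorem stmt13_general {V E F : Type*} [Fintype E] [Field F] {r : ℕ}
    (tl hd : E → V)
    (hacyc : ∀ v : V,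
      ¬ Relation.TransGen (fun a b => ∃ e : E, tl e = a ∧ hd e = b) v v)
    (ι : Fin r → E)
    (ψ : E → Fin r → F)
    (hψ : ∀ e, e ∉ Set.range ι →
      ψ e ∈ Submodule.span F {x | ∃ e', hd e' = tl e ∧ x = ψ e'})
    (A : Set V) (hA : ∀ j, tl (ι j) ∈ A) (t : V) :
    Module.finrank F
        (Submodule.span F {x | ∃ e, hd e = t ∧ x = ψ e}) ≤
      maxflow tl hd A t := by
  classical
  obtain ⟨ν, hν⟩ := exists_height_of_acyclic tl hd hacyc
  have hψA : ∀ e, tl e ∉ A → ψ e ∈ span F (ψ '' {e' | hd e' = tl e}) := fun e he => by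
    simpa [Set.image, eq_comm] using hψ e fun ⟨j, hj⟩ => he (hj ▸ hA j)
  obtain ⟨κ, a, ha, hspan, hli⟩ := exists_linearIndependent' F fun e : {e // hd e = t} => ψ e
  have : Fintype κ := Fintype.ofInjective a ha
  obtain ⟨Q, hQ⟩ := exists_isLinkage hν hψA (Subtype.val ∘ a) hli
  have hrank : Module.finrank F (span F {x | ∃ e, hd e = t ∧ x = ψ e}) = Fintype.card κ := by
    have hset : {x | ∃ e, hd e = t ∧ x = ψ e} = Set.range fun e : {e // hd e = t} => ψ e := by
      ext x
      simp [eq_comm]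
    rw [← finrank_span_eq_card hli, hspan, hset]
  rw [hrank]
  exact card_le_maxflow _ (fun i => by simpa [(a i).2] using hQ.isPathFrom_append i) hQ.disjoint

/-- For a linear network code `ψ` on a finite DAG and any vertex set `A`
containing all source vertices, the rank of the vectors received at `t` is at
most `maxflow(A, t)`. -/
theorem stmt13 {V E F : Type*} [Fintype E] [Field F] {r : ℕ}
    (tl hd : E → V)
    (hacyc : ∀ v : V,
      ¬ Relation.TransGen (fun a b => ∃ e : E, tl e = a ∧ hd e = b) v v)
    (ι : Fin r → E) (hι : Function.Injective ι)
    (ψ : E → Fin r → F)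
    (hψsrc : ∀ j, ψ (ι j) = Pi.single j 1)
    (hψ : ∀ e, e ∉ Set.range ι →
      ψ e ∈ Submodule.span F {x | ∃ e', hd e' = tl e ∧ x = ψ e'})
    (A : Set V) (hA : ∀ j, tl (ι j) ∈ A) (t : V) :
    Module.finrank F
        (Submodule.span F {x | ∃ e, hd e = t ∧ x = ψ e}) ≤
      maxflow tl hd A t :=
  stmt13_general tl hd hacyc ι ψ hψ A hA t
end

section
/- (Converse direction rank obstruction) Suppose in a multi-source network the sink t satisfies Σ_{i∈dem(t)} rᵢ + maxflow(S* \ ∪_{i∈dem(t)}{s*ᵢ}, t) > maxflow(S*, t). Let ψ be any linear network code for which rank{ψ(e)|_{U₁} : head(e)=t} = Σ_{i∈dem(t)} rᵢ and rank{ψ(e)|_{U₂} : head(e)=t} = maxflow(S* \ ∪_{i∈dem(t)}{s*ᵢ}, t), where U₁ is spanned by the demanded unit vectors and U₂ by the rest. Then {b_{i,j} : i ∈ dem(t)} ⊄ span{ψ(e) : head(e)=t}, i.e., t cannot decode its demanded sources. -/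
open scoped Classical

open Relation Finset

namespace EdgeDigraph

variable {V E : Type*} (tl hd : E → V)

def Adj (a b : V) : Prop := ∃ e : E, tl e = a ∧ hd e = b

def IsAcyclic : Prop := ∀ v : V, ¬ TransGen (Adj tl hd) v v

variable {tl hd}

lemma transGen_of_isChain {p : List E} (hp : p.IsChain (hd · = tl ·)) (h : p ≠ []) :
    TransGen (Adj tl hd) (tl (p.head h)) (hd (p.getLast h)) := by
  induction p with
  | nil => exact absurd rfl h
  | cons e q ih =>
    cases q with
    | nil => exact .single ⟨e, rfl, rfl⟩
    | cons f q =>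
      obtain ⟨hef, hq⟩ := List.isChain_cons_cons.mp hp
      exact .head ⟨e, rfl, hef⟩ (ih hq (List.cons_ne_nil _ _))

lemma nodup_of_isChain (hG : IsAcyclic tl hd) {p : List E} (hp : p.IsChain (hd · = tl ·)) :
    p.Nodup := by
  have : p.IsChain (fun e f => TransGen (Adj tl hd) (hd e) (hd f)) :=
    hp.imp fun e f hef => .single ⟨f, hef.symm, rfl⟩
  exact (List.isChain_iff_pairwise.mp this).imp fun h => by rintro rfl; exact hG _ h

lemma tl_head_ne_of_isPathFrom (hG : IsAcyclic tl hd) {A : Set V} {t : V} {p : List E}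
    (hp : IsPathFrom tl hd A t p) : tl (p.head hp.1) ≠ t := by
  obtain ⟨h, -, hlast, hc⟩ := hp
  intro ht
  have hcyc := transGen_of_isChain hc h
  rw [ht, hlast] at hcyc
  exact hG t hcyc

lemma isPathFrom_diff_singleton (hG : IsAcyclic tl hd) {A : Set V} {t : V} {p : List E}
    (hp : IsPathFrom tl hd A t p) : IsPathFrom tl hd (A \ {t}) t p :=
  ⟨hp.1, ⟨hp.2.1, tl_head_ne_of_isPathFrom hG hp⟩, hp.2.2⟩

lemma isPathFrom_singleton {A : Set V} {e : E} (he : tl e ∈ A) :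
    IsPathFrom tl hd A (hd e) [e] :=
  ⟨List.cons_ne_nil _ _, he, rfl, List.isChain_singleton e⟩

lemma isPathFrom_concat {A : Set V} {e : E} {p : List E} (hp : IsPathFrom tl hd A (tl e) p) :
    IsPathFrom tl hd A (hd e) (p ++ [e]) := by
  obtain ⟨h, hA, hlast, hc⟩ := hp
  refine ⟨by simp, by rwa [List.head_append_of_ne_nil h], by simp, ?_⟩
  exact hc.append (List.isChain_singleton e) (by simp [List.getLast?_eq_some_getLast h, hlast])

lemma wellFounded_hd_eq_tl [Finite E] (hG : IsAcyclic tl hd) :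
    WellFounded (fun e' e : E => hd e' = tl e) := by
  have lift : ∀ {e' e : E}, TransGen (fun a b : E => hd a = tl b) e' e →
      TransGen (Adj tl hd) (tl e') (tl e) := fun h =>
    h.lift' tl fun a b hab => .single ⟨a, rfl, hab⟩
  have : IsTrans E (TransGen (fun a b : E => hd a = tl b)) := ⟨fun _ _ _ => TransGen.trans⟩
  have : Std.Irrefl (TransGen (fun a b : E => hd a = tl b)) := ⟨fun e h => hG _ (lift h)⟩
  exact (Finite.wellFounded_of_trans_of_irrefl (TransGen (fun a b : E => hd a = tl b))).mono
    fun _ _ h => .single h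

section LinearCode

variable {R M : Type*} [Semiring R] [AddCommMonoid M] [Module R M]

theorem mem_span_image_of_forall_isPathFrom [Finite E] (hG : IsAcyclic tl hd) {A : Set V}
    {ψ : E → M}
    (hψ : ∀ e, tl e ∉ A → ψ e ∈ Submodule.span R {x | ∃ e', hd e' = tl e ∧ x = ψ e'})
    {K : Set E} {e : E} (hK : ∀ p, IsPathFrom tl hd A (hd e) p → ∃ f ∈ p, f ∈ K) :
    ψ e ∈ Submodule.span R (ψ '' K) := by
  induction e using (wellFounded_hd_eq_tl hG).induction with
  | _ e IH =>
  by_cases heK : e ∈ K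
  · exact Submodule.subset_span ⟨e, heK, rfl⟩
  have hA : tl e ∉ A := fun hA => by
    obtain ⟨f, hf, hfK⟩ := hK [e] (isPathFrom_singleton hA)
    exact heK (List.mem_singleton.mp hf ▸ hfK)
  refine Submodule.span_le.2 ?_ (hψ e hA)
  rintro _ ⟨e', he', rfl⟩
  refine IH e' he' fun p hp => ?_
  obtain ⟨f, hf, hfK⟩ := hK (p ++ [e]) (isPathFrom_concat (he' ▸ hp))
  rcases List.mem_append.1 hf with hf | hf
  · exact ⟨f, hf, hfK⟩
  · exact absurd (List.mem_singleton.mp hf ▸ hfK) heK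

end LinearCode

lemma exists_mem_crossing_of_isChain {Z : Set V} :
    ∀ {p : List E}, p.IsChain (hd · = tl ·) → ∀ h : p ≠ [], tl (p.head h) ∈ Z →
      hd (p.getLast h) ∉ Z → ∃ f ∈ p, tl f ∈ Z ∧ hd f ∉ Z
  | [], _, h, _, _ => absurd rfl h
  | [e], _, _, he, he' => ⟨e, List.mem_singleton_self e, he, he'⟩
  | e :: f :: q, hc, _, he, hlast => by
    obtain ⟨hef, hc⟩ := List.isChain_cons_cons.mp hc
    by_cases hZ : hd e ∈ Z
    · obtain ⟨g, hg, hgZ⟩ := exists_mem_crossing_of_isChain hc (List.cons_ne_nil _ _)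
        (hef ▸ hZ) (by simpa using hlast)
      exact ⟨g, List.mem_cons_of_mem e hg, hgZ⟩
    · exact ⟨e, List.mem_cons_self, he, hZ⟩

lemma sum_map_sub_of_isChain {G : Type*} [AddCommGroup G] (g : V → G) :
    ∀ {p : List E}, p.IsChain (hd · = tl ·) → ∀ h : p ≠ [],
      (p.map fun e => g (tl e) - g (hd e)).sum = g (tl (p.head h)) - g (hd (p.getLast h))
  | [], _, h => absurd rfl h
  | [e], _, _ => by simp
  | e :: f :: q, hc, _ => by
    obtain ⟨hef, hc⟩ := List.isChain_cons_cons.mp hc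
    rw [List.map_cons, List.sum_cons, sum_map_sub_of_isChain g hc (List.cons_ne_nil _ _)]
    simp [hef]

variable (tl hd)

noncomputable def net (S : Finset E) (v : V) : ℤ :=
  ∑ e ∈ S, ((if tl e = v then 1 else 0) - if hd e = v then 1 else 0)

/-- A `0/1`-flow from `A` to `t` is given by its set `S` of edges; its value is `-net S t`. -/
def IsFlow (A : Set V) (t : V) (S : Finset E) : Prop :=
  ∀ v, v ∉ A → v ≠ t → net tl hd S v = 0

/-- Residual walks use the edges outside `S` forwards and the edges of `S` backwards. -/
noncomputable def resStart (S : Finset E) (e : E) : V := if e ∈ S then hd e else tl e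

noncomputable def resEnd (S : Finset E) (e : E) : V := if e ∈ S then tl e else hd e

def IsResWalk (S : Finset E) : List E → V → V → Prop
  | [], a, c => a = c
  | e :: L, a, c => resStart tl hd S e = a ∧ IsResWalk S L (resEnd tl hd S e) c

variable {tl hd}

noncomputable def toggle (S : Finset E) (e : E) : Finset E :=
  if e ∈ S then S.erase e else insert e S

lemma mem_toggle_of_ne {S : Finset E} {e f : E} (hfe : f ≠ e) : f ∈ toggle S e ↔ f ∈ S := by
  unfold toggle; split_ifs <;> simp [hfe]

lemma net_toggle (S : Finset E) (e : E) (v : V) :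
    net tl hd (toggle S e) v = net tl hd S v + (if resStart tl hd S e = v then 1 else 0) -
      if resEnd tl hd S e = v then 1 else 0 := by
  by_cases he : e ∈ S
  · simp only [toggle, resStart, resEnd, if_pos he, net, sum_erase_eq_sub he]; ring
  · simp only [toggle, resStart, resEnd, if_neg he, net, sum_insert he]; ring

lemma net_eq_card_of_forall_hd_ne {S : Finset E} {v : V} (h : ∀ e ∈ S, hd e ≠ v) :
    net tl hd S v = #(S.filter (tl · = v)) := by
  rw [net, natCast_card_filter]
  exact sum_congr rfl fun e he => by simp [h e he]

lemma net_toFinset_of_isChain (hG : IsAcyclic tl hd) {p : List E}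
    (hp : p.IsChain (hd · = tl ·)) (h : p ≠ []) (v : V) :
    net tl hd p.toFinset v =
      (if tl (p.head h) = v then 1 else 0) - if hd (p.getLast h) = v then 1 else 0 := by
  rw [net, List.sum_toFinset _ (nodup_of_isChain hG hp)]
  exact sum_map_sub_of_isChain (fun w => if w = v then 1 else 0) hp h

lemma isResWalk_append {S : Finset E} {L₁ L₂ : List E} {a c : V} :
    IsResWalk tl hd S (L₁ ++ L₂) a c ↔
      ∃ b, IsResWalk tl hd S L₁ a b ∧ IsResWalk tl hd S L₂ b c := by
  induction L₁ generalizing a with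
  | nil => simp [IsResWalk]
  | cons e L ih => simp [IsResWalk, ih, and_assoc]

lemma IsResWalk.congr {S S' : Finset E} {L : List E} {a c : V} (hw : IsResWalk tl hd S L a c)
    (h : ∀ e ∈ L, e ∈ S' ↔ e ∈ S) : IsResWalk tl hd S' L a c := by
  induction L generalizing a with
  | nil => exact hw
  | cons e L ih =>
    have he := h e List.mem_cons_self
    have hstart : resStart tl hd S' e = resStart tl hd S e := by simp only [resStart, he]
    have hend : resEnd tl hd S' e = resEnd tl hd S e := by simp only [resEnd, he]
    exact ⟨hstart.trans hw.1, hend ▸ ih hw.2 fun f hf => h f (List.mem_cons_of_mem e hf)⟩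

/-- A repeated edge is traversed in the same direction both times, so the loop between the two
traversals can be cut out. -/
lemma IsResWalk.exists_nodup {S : Finset E} {L : List E} {a c : V}
    (hw : IsResWalk tl hd S L a c) : ∃ L', IsResWalk tl hd S L' a c ∧ L'.Nodup := by
  induction L generalizing a with
  | nil => exact ⟨[], hw, List.nodup_nil⟩
  | cons e L ih =>
    obtain ⟨L', hw', hnd⟩ := ih hw.2
    by_cases heL : e ∈ L'
    · obtain ⟨M₁, M₂, rfl⟩ := List.append_of_mem heL
      obtain ⟨b, -, hb⟩ := isResWalk_append.1 hw'
      exact ⟨e :: M₂, ⟨hw.1, hb.2⟩, hnd.sublist (List.sublist_append_right _ _)⟩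
    · exact ⟨e :: L', ⟨hw.1, hw'⟩, List.nodup_cons.2 ⟨heL, hnd⟩⟩

lemma IsResWalk.exists_net_eq {S : Finset E} {L : List E} {a c : V}
    (hw : IsResWalk tl hd S L a c) (hL : L.Nodup) :
    ∃ S' : Finset E, ∀ v, net tl hd S' v =
      net tl hd S v + (if a = v then 1 else 0) - if c = v then 1 else 0 := by
  induction L generalizing S a with
  | nil => exact ⟨S, fun v => by rw [show a = c from hw]; ring⟩
  | cons e L ih =>
    obtain ⟨heL, hL⟩ := List.nodup_cons.1 hL
    obtain ⟨S', hS'⟩ :=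
      ih (hw.2.congr fun f hf => mem_toggle_of_ne (ne_of_mem_of_not_mem hf heL)) hL
    exact ⟨S', fun v => by rw [hS', net_toggle, hw.1]; ring⟩

variable {A : Set V} {t : V}

lemma IsFlow.exists_isPathFrom [Finite E] (hG : IsAcyclic tl hd) {S : Finset E}
    (hS : IsFlow tl hd A t S) {e : E} (heS : e ∈ S) (het : ReflTransGen (Adj tl hd) (hd e) t) :
    ∃ p, IsPathFrom tl hd A (hd e) p ∧ ∀ f ∈ p, f ∈ S := by
  induction e using (wellFounded_hd_eq_tl hG).induction with
  | _ e IH =>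
  by_cases hA : tl e ∈ A
  · exact ⟨[e], isPathFrom_singleton hA, by simpa using heS⟩
  have ht : tl e ≠ t := fun ht => by
    -- this is why `het` is carried along: conservation holds at `tl e`
    have hcyc := TransGen.head' (r := Adj tl hd) ⟨e, rfl, rfl⟩ het
    rw [ht] at hcyc
    exact hG t hcyc
  obtain ⟨e', he'S, he'⟩ : ∃ e' ∈ S, hd e' = tl e := by
    by_contra! h
    have hnet := net_eq_card_of_forall_hd_ne (tl := tl) h
    have hpos : 0 < #(S.filter (tl · = tl e)) := card_pos.2 ⟨e, by simp [heS]⟩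
    rw [hS _ hA ht] at hnet
    omega
  obtain ⟨p, hp, hpS⟩ := IH e' he' he'S (he' ▸ ReflTransGen.head ⟨e, rfl, rfl⟩ het)
  refine ⟨p ++ [e], isPathFrom_concat (he' ▸ hp), fun f hf => ?_⟩
  rcases List.mem_append.1 hf with hf | hf
  · exact hpS f hf
  · exact List.mem_singleton.mp hf ▸ heS

lemma IsFlow.exists_disjoint_paths [Finite E] (hG : IsAcyclic tl hd) :
    ∀ (k : ℕ) {S : Finset E}, IsFlow tl hd A t S → (k : ℤ) ≤ -net tl hd S t →
      ∃ P : List (List E), P.length = k ∧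
        (∀ p ∈ P, IsPathFrom tl hd A t p ∧ ∀ f ∈ p, f ∈ S) ∧ P.Pairwise List.Disjoint
  | 0, _, _, _ => ⟨[], rfl, by simp, List.Pairwise.nil⟩
  | k + 1, S, hS, hk => by
    obtain ⟨e, heS, het⟩ : ∃ e ∈ S, hd e = t := by
      by_contra! h
      have := net_eq_card_of_forall_hd_ne (tl := tl) h
      omega
    obtain ⟨p, hp, hpS⟩ := hS.exists_isPathFrom hG heS (het ▸ ReflTransGen.refl)
    rw [het] at hp
    obtain ⟨h, hA, hlast, hc⟩ := hp
    have hsub : p.toFinset ⊆ S := fun f hf => hpS f (List.mem_toFinset.1 hf)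
    have hnet : ∀ v, net tl hd (S \ p.toFinset) v = net tl hd S v -
        ((if tl (p.head h) = v then 1 else 0) - if t = v then 1 else 0) := fun v => by
      rw [← hlast, ← net_toFinset_of_isChain hG hc h, net, sum_sdiff_eq_sub hsub, net, net]
    have hstart : tl (p.head h) ≠ t := tl_head_ne_of_isPathFrom hG ⟨h, hA, hlast, hc⟩
    obtain ⟨P, hlen, hP, hdisj⟩ := IsFlow.exists_disjoint_paths hG k (S := S \ p.toFinset)
      (fun v hvA hvt => by
        rw [hnet, hS v hvA hvt, if_neg (ne_of_mem_of_not_mem hA hvA), if_neg (Ne.symm hvt)]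
        rfl)
      (by rw [hnet, if_neg hstart, if_pos rfl]; omega)
    refine ⟨p :: P, by simp [hlen], ?_,
      List.pairwise_cons.2 ⟨fun q hq f hfp hfq => ?_, hdisj⟩⟩
    · simp only [List.mem_cons, forall_eq_or_imp]
      exact ⟨⟨⟨h, hA, hlast, hc⟩, hpS⟩, fun q hq =>
        ⟨(hP q hq).1, fun f hf => (mem_sdiff.1 ((hP q hq).2 f hf)).1⟩⟩
    · exact (mem_sdiff.1 ((hP q hq).2 f hfq)).2 (List.mem_toFinset.2 hfp)

lemma bddAbove_maxflow_set [Finite E] (A : Set V) (t : V) :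
    BddAbove {n | ∃ P : Fin n → List E, (∀ i, IsPathFrom tl hd A t (P i)) ∧
      ∀ i j, i ≠ j → ∀ e, e ∈ P i → e ∉ P j} := by
  have := Fintype.ofFinite E
  refine ⟨Fintype.card E, fun n ⟨P, hP, hdisj⟩ => ?_⟩
  have hinj : Function.Injective fun i => (P i).head (hP i).1 := fun i j hij => by
    by_contra hne
    have hj := List.head_mem (hP j).1
    rw [← show (P i).head _ = (P j).head _ from hij] at hj
    exact hdisj i j hne _ (List.head_mem _) hj
  simpa using Fintype.card_le_of_injective _ hinj

lemma length_le_maxflow [Finite E] {P : List (List E)} (hP : ∀ p ∈ P, IsPathFrom tl hd A t p)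
    (hdisj : P.Pairwise List.Disjoint) : P.length ≤ maxflow tl hd A t := by
  refine le_csSup (bddAbove_maxflow_set A t) ⟨P.get, fun i => hP _ (List.get_mem P i), ?_⟩
  intro i j hij e hi hj
  rcases lt_or_gt_of_ne hij with h | h
  · exact hdisj.rel_get_of_lt h hi hj
  · exact hdisj.rel_get_of_lt h hj hi

lemma maxflow_mono [Finite E] {B : Set V} (hAB : A ⊆ B) :
    maxflow tl hd A t ≤ maxflow tl hd B t :=
  csSup_le_csSup (bddAbove_maxflow_set B t)
    ⟨0, fun i => i.elim0, fun i => i.elim0, fun i => i.elim0⟩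
    fun _ ⟨P, hP, hdisj⟩ => ⟨P, fun i => ⟨(hP i).1, hAB (hP i).2.1, (hP i).2.2⟩, hdisj⟩

lemma IsFlow.le_maxflow [Finite E] (hG : IsAcyclic tl hd) {S : Finset E}
    (hS : IsFlow tl hd A t S) : -net tl hd S t ≤ maxflow tl hd A t := by
  rcases lt_or_ge (-net tl hd S t) 0 with hneg | hnonneg
  · omega
  obtain ⟨P, hlen, hP, hdisj⟩ := hS.exists_disjoint_paths hG (-net tl hd S t).toNat
    (Int.toNat_of_nonneg hnonneg).le
  have := length_le_maxflow (fun p hp => (hP p hp).1) hdisj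
  omega

lemma sum_net (S : Finset E) (U : Finset V) : ∑ v ∈ U, net tl hd S v =
    ∑ e ∈ S, ((if tl e ∈ U then 1 else 0) - if hd e ∈ U then 1 else 0) := by
  simp only [net]
  rw [sum_comm]
  simp [sum_sub_distrib, sum_ite_eq]

/-- The set `Z` of vertices reachable from `A` by residual walks is closed under residual steps,
so the `S`-edges leaving `Z` meet every path to `t`, and no `S`-edge enters `Z`. -/
lemma IsFlow.exists_cut {S : Finset E} (hS : IsFlow tl hd A t S)
    (hno : ∀ a ∈ A, ∀ L, ¬ IsResWalk tl hd S L a t) :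
    ∃ K : Finset E, (∀ p, IsPathFrom tl hd A t p → ∃ f ∈ p, f ∈ K) ∧
      (#K : ℤ) = -net tl hd S t := by
  set Z : Set V := {v | ∃ a ∈ A, ∃ L, IsResWalk tl hd S L a v}
  have hAZ : A ⊆ Z := fun a ha => ⟨a, ha, [], rfl⟩
  have htZ : t ∉ Z := fun ⟨a, ha, L, hw⟩ => hno a ha L hw
  have hclosed : ∀ e, resStart tl hd S e ∈ Z → resEnd tl hd S e ∈ Z :=
    fun e ⟨a, ha, L, hw⟩ => ⟨a, ha, L ++ [e], isResWalk_append.2 ⟨_, hw, rfl, rfl⟩⟩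
  have hfwd : ∀ e ∉ S, tl e ∈ Z → hd e ∈ Z := fun e he => by
    simpa [resStart, resEnd, he] using hclosed e
  have hbwd : ∀ e ∈ S, hd e ∈ Z → tl e ∈ Z := fun e he => by
    simpa [resStart, resEnd, he] using hclosed e
  refine ⟨S.filter fun e => tl e ∈ Z ∧ hd e ∉ Z, fun p hp => ?_, ?_⟩
  · obtain ⟨h, hA, hlast, hc⟩ := hp
    obtain ⟨f, hf, hfZ, hfZ'⟩ :=
      exists_mem_crossing_of_isChain hc h (hAZ hA) (hlast ▸ htZ)
    exact ⟨f, hf, mem_filter.2 ⟨by_contra fun hfS => hfZ' (hfwd f hfS hfZ), hfZ, hfZ'⟩⟩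
  · set U := (insert t (S.image tl ∪ S.image hd)).filter (· ∉ Z)
    have hU : ∀ e ∈ S, (tl e ∈ U ↔ tl e ∉ Z) ∧ (hd e ∈ U ↔ hd e ∉ Z) := by
      intro e he
      simp only [U, mem_filter, mem_insert, mem_union, mem_image]
      exact ⟨and_iff_right (.inr (.inl ⟨e, he, rfl⟩)),
        and_iff_right (.inr (.inr ⟨e, he, rfl⟩))⟩
    have hsingle : ∑ v ∈ U, net tl hd S v = net tl hd S t :=
      sum_eq_single_of_mem t (by simp [U, htZ]) fun v hv hvt =>
        hS v (fun hvA => (mem_filter.1 hv).2 (hAZ hvA)) hvt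
    rw [← hsingle, sum_net, natCast_card_filter, ← sum_neg_distrib]
    refine sum_congr rfl fun e he => ?_
    have := hbwd e he
    rw [if_congr (hU e he).1 rfl rfl, if_congr (hU e he).2 rfl rfl]
    by_cases htl : tl e ∈ Z <;> by_cases hhd : hd e ∈ Z <;> simp_all

lemma exists_isFlow_forall_not_isResWalk [Fintype E] (htA : t ∉ A) :
    ∃ S, IsFlow tl hd A t S ∧ ∀ a ∈ A, ∀ L, ¬ IsResWalk tl hd S L a t := by
  have h0 : IsFlow tl hd A t ∅ := fun v _ _ => by simp [net]
  obtain ⟨S, hS, hmax⟩ :=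
    exists_max_image ((univ : Finset (Finset E)).filter (IsFlow tl hd A t))
      (fun S => -net tl hd S t) ⟨∅, by simpa using h0⟩
  rw [mem_filter] at hS
  refine ⟨S, hS.2, fun a ha L hw => ?_⟩
  obtain ⟨L', hw', hnd⟩ := hw.exists_nodup
  obtain ⟨S', hS'⟩ := hw'.exists_net_eq hnd
  have hflow : IsFlow tl hd A t S' := fun v hvA hvt => by
    rw [hS', hS.2 v hvA hvt, if_neg (ne_of_mem_of_not_mem ha hvA), if_neg (Ne.symm hvt)]
    rfl
  have := hmax S' (by simpa using hflow)
  rw [hS', if_neg (ne_of_mem_of_not_mem ha htA), if_pos rfl] at this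
  omega

theorem exists_cut_card_le_maxflow [Fintype E] (hG : IsAcyclic tl hd) (htA : t ∉ A) :
    ∃ K : Finset E, (∀ p, IsPathFrom tl hd A t p → ∃ f ∈ p, f ∈ K) ∧
      #K ≤ maxflow tl hd A t := by
  obtain ⟨S, hS, hno⟩ := exists_isFlow_forall_not_isResWalk (tl := tl) (hd := hd) htA
  obtain ⟨K, hK, hcard⟩ := hS.exists_cut hno
  have := hS.le_maxflow hG
  exact ⟨K, hK, by omega⟩

theorem finrank_span_le_maxflow {K M : Type*} [DivisionRing K] [AddCommGroup M] [Module K M]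
    [Fintype E] (hG : IsAcyclic tl hd) {ψ : E → M}
    (hψ : ∀ e, tl e ∉ A →
      ψ e ∈ Submodule.span K {x | ∃ e', hd e' = tl e ∧ x = ψ e'}) :
    Module.finrank K (Submodule.span K {x | ∃ e, hd e = t ∧ x = ψ e}) ≤
      maxflow tl hd A t := by
  obtain ⟨C, hC, hcard⟩ :=
    exists_cut_card_le_maxflow hG (A := A \ {t}) (t := t) fun h => h.2 rfl
  have hle : Submodule.span K {x | ∃ e, hd e = t ∧ x = ψ e} ≤
      Submodule.span K (C.image ψ : Set M) := by
    rw [Submodule.span_le, coe_image]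
    rintro _ ⟨e, rfl, rfl⟩
    exact mem_span_image_of_forall_isPathFrom hG hψ fun p hp =>
      hC p (isPathFrom_diff_singleton hG hp)
  calc Module.finrank K (Submodule.span K {x | ∃ e, hd e = t ∧ x = ψ e})
      ≤ Module.finrank K (Submodule.span K (C.image ψ : Set M)) := Submodule.finrank_mono hle
    _ ≤ #(C.image ψ) := finrank_span_finset_le_card (R := K) _
    _ ≤ #C := card_image_le
    _ ≤ maxflow tl hd (A \ {t}) t := hcard
    _ ≤ maxflow tl hd A t := maxflow_mono Set.sdiff_subset

end EdgeDigraph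

theorem Submodule.finrank_map_add_finrank_le_of_le_ker {K M N : Type*} [DivisionRing K]
    [AddCommGroup M] [Module K M] [AddCommGroup N] [Module K N] (f : M →ₗ[K] N)
    {U W : Submodule K M} [FiniteDimensional K W] (hUW : U ≤ W) (hUf : U ≤ LinearMap.ker f) :
    Module.finrank K (W.map f) + Module.finrank K U ≤ Module.finrank K W := by
  rw [← LinearMap.range_domRestrict, ← (f.domRestrict W).finrank_range_add_finrank_ker,
    LinearMap.ker_domRestrict, ← (Submodule.comapSubtypeEquivOfLe hUW).finrank_eq]
  gcongr
  exact Submodule.finrank_mono (Submodule.comap_mono hUf)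

section CoordProj

variable (F : Type*) {ι : Type*} [Semiring F]

def coordProj (p : ι → Prop) [DecidablePred p] : (ι → F) →ₗ[F] ι → F :=
  LinearMap.pi fun j => if p j then LinearMap.proj j else 0

variable {F}

lemma coordProj_apply (p : ι → Prop) [DecidablePred p] (x : ι → F) :
    coordProj F p x = fun j => if p j then x j else 0 :=
  funext fun j => by by_cases hj : p j <;> simp [coordProj, hj]

theorem card_add_finrank_map_coordProj_le {F : Type*} [Field F] [Fintype ι] [DecidableEq ι]
    (p : ι → Prop) [DecidablePred p] {W : Submodule F (ι → F)}
    (hW : ∀ j, p j → Pi.single j 1 ∈ W) :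
    Fintype.card {j // p j} + Module.finrank F (W.map (coordProj F fun j => ¬ p j)) ≤
      Module.finrank F W := by
  let U := Submodule.span F (Set.range fun j : {j // p j} => (Pi.single j.1 1 : ι → F))
  have hU : Module.finrank F U = Fintype.card {j // p j} :=
    finrank_span_eq_card ((Pi.linearIndependent_single_one ι F).comp _ Subtype.val_injective)
  have hUW : U ≤ W := Submodule.span_le.2 (Set.range_subset_iff.2 fun j => hW j.1 j.2)
  have hUker : U ≤ LinearMap.ker (coordProj F fun j => ¬ p j) := by
    refine Submodule.span_le.2 (Set.range_subset_iff.2 fun j => ?_)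
    rw [SetLike.mem_coe, LinearMap.mem_ker, coordProj_apply]
    ext i
    split_ifs with hi
    · rfl
    · exact Pi.single_eq_of_ne (fun h : i = j.1 => hi (h ▸ j.2)) 1
  rw [← hU, add_comm]
  exact Submodule.finrank_map_add_finrank_le_of_le_ker _ hUW hUker

end CoordProj

/-- `srcOf j` is the source whose unit vector `b_j = Pi.single j 1` enters the network on
the edge `ι j`; `U₁` is spanned by the coordinates `j` with `srcOf j ∈ dem`, `U₂` by the
others. -/
theorem stmt18_general {V E F : Type*} [Fintype E] [Field F] {r m : ℕ}
    (tl hd : E → V)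
    (hacyc : ∀ v : V,
      ¬ Relation.TransGen (fun a b => ∃ e : E, tl e = a ∧ hd e = b) v v)
    (srcOf : Fin r → Fin m) (ι : Fin r → E)
    (ψ : E → Fin r → F)
    (hψ : ∀ e, e ∉ Set.range ι →
      ψ e ∈ Submodule.span F {x | ∃ e', hd e' = tl e ∧ x = ψ e'})
    (dem : Set (Fin m)) (t : V)
    (hrank2 : Module.finrank F (Submodule.span F
        {x | ∃ e, hd e = t ∧ x = fun j => if srcOf j ∉ dem then ψ e j else 0}) =
      maxflow tl hd {v | ∃ j, srcOf j ∉ dem ∧ tl (ι j) = v} t)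
    (hgt : maxflow tl hd {v | ∃ j, tl (ι j) = v} t <
      Fintype.card {j : Fin r // srcOf j ∈ dem} +
        maxflow tl hd {v | ∃ j, srcOf j ∉ dem ∧ tl (ι j) = v} t) :
    ¬ ∀ j : Fin r, srcOf j ∈ dem →
        (Pi.single j 1 : Fin r → F) ∈
          Submodule.span F {x | ∃ e, hd e = t ∧ x = ψ e} := by
  intro hdec
  have hW := EdgeDigraph.finrank_span_le_maxflow (K := F) (A := {v | ∃ j, tl (ι j) = v})
    (t := t) hacyc fun e he => hψ e fun ⟨j, hj⟩ => he ⟨j, congrArg tl hj⟩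
  have hdim := card_add_finrank_map_coordProj_le (fun j => srcOf j ∈ dem) hdec
  have hproj : (Submodule.span F {x | ∃ e, hd e = t ∧ x = ψ e}).map
      (coordProj F fun j => srcOf j ∉ dem) = Submodule.span F
        {x | ∃ e, hd e = t ∧ x = fun j => if srcOf j ∉ dem then ψ e j else 0} := by
    rw [Submodule.map_span]
    congr 1
    ext x
    simp [coordProj_apply, eq_comm]
  rw [hproj, hrank2] at hdim
  omega

/-- Converse-direction rank obstruction.  Let `ψ` be a linear network code on a
finite DAG whose source edges `ι j` (of source `srcOf j`) carry the unit vectors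
`b_j`, `U₁` spanned by the demanded coordinates `{j | srcOf j ∈ dem}` and `U₂` by
the rest.  If the rank of the `U₁`-components received at `t` equals
`d₁ = #{j | srcOf j ∈ dem}`, the rank of the `U₂`-components equals
`d₂ = maxflow(S* \ demanded sources, t)`, and `d₁ + d₂ > maxflow(S*, t)`, then
`t` cannot decode: some demanded unit vector is not in the span of the received
vectors. -/
theorem stmt18 {V E F : Type*} [Fintype E] [Field F] {r m : ℕ}
    (tl hd : E → V)
    (hacyc : ∀ v : V,
      ¬ Relation.TransGen (fun a b => ∃ e : E, tl e = a ∧ hd e = b) v v)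
    (srcOf : Fin r → Fin m) (ι : Fin r → E) (hι : Function.Injective ι)
    (ψ : E → Fin r → F)
    (hψsrc : ∀ j, ψ (ι j) = Pi.single j 1)
    (hψ : ∀ e, e ∉ Set.range ι →
      ψ e ∈ Submodule.span F {x | ∃ e', hd e' = tl e ∧ x = ψ e'})
    (dem : Set (Fin m)) (t : V)
    (hrank1 : Module.finrank F (Submodule.span F
        {x | ∃ e, hd e = t ∧ x = fun j => if srcOf j ∈ dem then ψ e j else 0}) =
      Fintype.card {j : Fin r // srcOf j ∈ dem})
    (hrank2 : Module.finrank F (Submodule.span F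
        {x | ∃ e, hd e = t ∧ x = fun j => if srcOf j ∉ dem then ψ e j else 0}) =
      maxflow tl hd {v | ∃ j, srcOf j ∉ dem ∧ tl (ι j) = v} t)
    (hgt : maxflow tl hd {v | ∃ j, tl (ι j) = v} t <
      Fintype.card {j : Fin r // srcOf j ∈ dem} +
        maxflow tl hd {v | ∃ j, srcOf j ∉ dem ∧ tl (ι j) = v} t) :
    ¬ ∀ j : Fin r, srcOf j ∈ dem →
        (Pi.single j 1 : Fin r → F) ∈
          Submodule.span F {x | ∃ e, hd e = t ∧ x = ψ e} :=
  stmt18_general tl hd hacyc srcOf ι ψ hψ dem t hrank2 hgt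
end
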